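/- If a string w contains a character x exactly once, w = v x v', and the sets of characters of v and v' are disjoint and both avoid x, and both v and v' are uniquely decodable, then w is uniquely decodable. -/

import Mathlib

/-!
Since `x` occurs exactly once in `w = v x v'`, any string with the same bigram encoding also
contains `x` exactly once, say `u x u'`. In `$v x v'$` a bigram starting with `$` or with a letter
of `v` ends in a letter of `v` or in `x`; following `$u x` from the left this forces every letter of
`u` into `v`, and reading both strings backwards every letter of `u'` into `v'`. The bigrams of
`$u x u'$` ending in a letter of `v` or in `x` are then exactly those of `$u x`, and replacing that
`x` by `$` turns them into the encoding of `u`. The same holds for `v`, so `Φ(u) = Φ(v)`, and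
symmetrically `Φ(u') = Φ(v')`; unique decodability of `v` and `v'` finishes the proof.
-/

/-- The multiset of bigrams (length-2 contiguous substrings) of a list. -/
def bigrams {β : Type*} (l : List β) : Multiset (β × β) :=
  (l.zip l.tail : List (β × β))

/-- The delimited form `$w$` of a string `w` over `α`, with `none` as the delimiter. -/
def delim {α : Type*} (w : List α) : List (Option α) :=
  none :: (w.map some ++ [none])

/-- The bigram encoding of a string: the multiset of bigrams of its delimited form. -/
def Phi {α : Type*} (w : List α) : Multiset (Option α × Option α) :=
  bigrams (delim w)

/-- A string is uniquely decodable if it is the only string with its bigram encoding. -/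
def UD {α : Type*} (w : List α) : Prop :=
  ∀ w' : List α, Phi w' = Phi w → w' = w

theorem List.exists_eq_append_cons_of_count_eq_one {β : Type*} [DecidableEq β] {l : List β}
    {x : β} (h : l.count x = 1) : ∃ u u', l = u ++ x :: u' ∧ x ∉ u ∧ x ∉ u' := by
  obtain ⟨u, u', rfl⟩ := List.append_of_mem (List.count_pos_iff.mp (h ▸ Nat.one_pos))
  simp only [List.count_append, List.count_cons_self] at h
  exact ⟨u, u', rfl, List.count_eq_zero.mp (by omega), List.count_eq_zero.mp (by omega)⟩

section Bigrams

variable {β : Type*}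

theorem bigrams_cons_cons (a b : β) (l : List β) :
    bigrams (a :: b :: l) = (a, b) ::ₘ bigrams (b :: l) := rfl

theorem bigrams_eq_zip_dropLast_tail (l : List β) :
    bigrams l = (l.dropLast.zip l.tail : Multiset (β × β)) := by
  induction l with
  | nil => rfl
  | cons a t ih =>
    cases t with
    | nil => rfl
    | cons b t => simp [bigrams_cons_cons, ih]

theorem mem_dropLast_tail_of_mem_bigrams {l : List β} {z : β × β} (h : z ∈ bigrams l) :
    z.1 ∈ l.dropLast ∧ z.2 ∈ l.tail := by
  rw [bigrams_eq_zip_dropLast_tail, Multiset.mem_coe] at h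
  exact List.of_mem_zip h

theorem map_snd_bigrams (l : List β) : (bigrams l).map Prod.snd = l.tail := by
  rw [bigrams, Multiset.map_coe, List.map_snd_zip (by simp)]

theorem bigrams_append_cons (l₁ : List β) (a : β) (l₂ : List β) :
    bigrams (l₁ ++ a :: l₂) = bigrams (l₁ ++ [a]) + bigrams (a :: l₂) := by
  induction l₁ with
  | nil => simp [bigrams]
  | cons b t ih =>
    cases t with
    | nil => rfl
    | cons c t =>
      simp only [List.cons_append] at ih ⊢
      rw [bigrams_cons_cons, bigrams_cons_cons, ih, Multiset.cons_add]

theorem bigrams_map {γ : Type*} (f : β → γ) (l : List β) :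
    bigrams (l.map f) = (bigrams l).map (Prod.map f f) := by
  rw [bigrams, bigrams, ← List.map_tail, List.zip_map, Multiset.map_coe]

theorem bigrams_reverse (l : List β) :
    bigrams l.reverse = (bigrams l).map Prod.swap := by
  have hlen : l.tail.length = l.dropLast.length := by simp
  rw [bigrams_eq_zip_dropLast_tail, bigrams_eq_zip_dropLast_tail, List.dropLast_reverse,
    List.tail_reverse, List.zip_eq_zipWith, ← List.reverse_zipWith hlen, ← List.zip_eq_zipWith,
    Multiset.coe_reverse, Multiset.map_coe, List.zip_swap]

theorem forall_mem_of_bigrams_closed (p : β → Prop) (l : List β) (hhead : ∀ a ∈ l.head?, p a)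
    (hstep : ∀ z ∈ bigrams l, p z.1 → p z.2) : ∀ a ∈ l, p a := by
  induction l with
  | nil => simp
  | cons a t ih =>
    have ha : p a := hhead a rfl
    cases t with
    | nil => simpa using ha
    | cons b t =>
      rw [bigrams_cons_cons] at hstep
      have hb : p b := hstep (a, b) (Multiset.mem_cons_self _ _) ha
      intro c hc
      rcases List.mem_cons.mp hc with rfl | hc
      · exact ha
      · exact ih (by simpa using hb) (fun z hz => hstep z (Multiset.mem_cons_of_mem hz)) c hc

end Bigrams

section Phi

variable {α : Type*}

theorem Phi_append_cons (v : List α) (x : α) (v' : List α) :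
    Phi (v ++ x :: v') =
      bigrams (none :: v.map some ++ [some x]) + bigrams (some x :: v'.map some ++ [none]) := by
  have : delim (v ++ x :: v') = (none :: v.map some) ++ some x :: (v'.map some ++ [none]) := by
    simp [delim]
  rw [Phi, this, bigrams_append_cons, ← List.cons_append (a := some x)]

theorem Phi_reverse (w : List α) : Phi w.reverse = (Phi w).map Prod.swap := by
  have : delim w.reverse = (delim w).reverse := by simp [delim]
  rw [Phi, this, bigrams_reverse, Phi]

theorem perm_of_Phi_eq {w w' : List α} (h : Phi w' = Phi w) : w'.Perm w := by
  have hsnd : ∀ l : List α, (Phi l).map Prod.snd = (l.map some ++ [none] : List (Option α)) :=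
    fun l => map_snd_bigrams (delim l)
  have := congrArg (Multiset.map Prod.snd) h
  rwa [hsnd, hsnd, Multiset.coe_eq_coe, List.perm_append_right_iff,
    List.map_perm_map_iff (Option.some_injective α)] at this

theorem Phi_reverse_append_cons_eq {x : α} {u u' v v' : List α}
    (h : Phi (u ++ x :: u') = Phi (v ++ x :: v')) :
    Phi (u'.reverse ++ x :: u.reverse) = Phi (v'.reverse ++ x :: v.reverse) := by
  have hrev : ∀ l l' : List α, l'.reverse ++ x :: l.reverse = (l ++ x :: l').reverse := by simp
  rw [hrev, hrev, Phi_reverse, Phi_reverse, h]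

variable {x : α} {v v' : List α}

theorem snd_mem_of_mem_Phi_append_cons (hxv : x ∉ v) (hdisj : v.Disjoint v') {a b : Option α}
    (hab : (a, b) ∈ Phi (v ++ x :: v')) (ha : a ∈ none :: v.map some) :
    b ∈ (x :: v).map some := by
  rw [Phi_append_cons, Multiset.mem_add] at hab
  rcases hab with hab | hab
  · have hb := (mem_dropLast_tail_of_mem_bigrams hab).2
    simp only [List.cons_append, List.tail_cons, List.mem_append, List.mem_map,
      List.mem_singleton] at hb
    rcases hb with ⟨c, hc, rfl⟩ | rfl
    · simpa using Or.inr hc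
    · simp
  · have ha' := (mem_dropLast_tail_of_mem_bigrams hab).1
    rw [List.dropLast_concat, List.mem_cons, List.mem_map] at ha'
    rcases ha' with rfl | ⟨c, hc, rfl⟩
    · exact absurd (by simpa using ha) hxv
    · exact absurd (by simpa using ha) fun hcv => hdisj hcv hc

theorem subset_of_Phi_append_cons_eq (hxv : x ∉ v) (hdisj : v.Disjoint v') {u u' : List α}
    (hxu : x ∉ u) (h : Phi (u ++ x :: u') = Phi (v ++ x :: v')) : u ⊆ v := by
  have hclosed := forall_mem_of_bigrams_closed (· ∈ none :: (x :: v).map some)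
    (none :: u.map some ++ [some x]) (by simp) ?_
  · intro c hc
    simpa [ne_of_mem_of_not_mem hc hxu] using hclosed (some c) (by simp [hc])
  · rintro ⟨a, b⟩ hab ha
    have hab' : (a, b) ∈ Phi (v ++ x :: v') := by
      rw [← h, Phi_append_cons]
      exact Multiset.mem_add.mpr (Or.inl hab)
    have hau := (mem_dropLast_tail_of_mem_bigrams hab).1
    rw [List.dropLast_concat, List.mem_cons, List.mem_map] at hau
    refine List.mem_cons_of_mem _ (snd_mem_of_mem_Phi_append_cons hxv hdisj hab' ?_)
    rcases hau with rfl | ⟨c, hc, rfl⟩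
    · exact List.mem_cons_self
    · simpa [ne_of_mem_of_not_mem hc hxu] using ha

theorem Phi_eq_map_filter_Phi_append_cons [DecidableEq α] (s : List α) {u u' : List α}
    (hx : x ∉ s) (hu : u ⊆ s) (hxu' : x ∉ u') (hu' : u'.Disjoint s) :
    Phi u = ((Phi (u ++ x :: u')).filter (fun z => z.2 ∈ (x :: s).map some)).map
      (Prod.map (Option.filter (· != x)) (Option.filter (· != x))) := by
  have hdelim : (none :: u.map some ++ [some x]).map (Option.filter (· != x)) = delim u := by
    simpa [delim, Option.filter_some] using fun c hc => ne_of_mem_of_not_mem (hu hc) hx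
  rw [Phi_append_cons, Multiset.filter_add, Multiset.filter_eq_self.mpr, Multiset.filter_eq_nil.mpr,
    add_zero, ← bigrams_map, hdelim, Phi]
  · rintro ⟨a, b⟩ hz
    have hb := (mem_dropLast_tail_of_mem_bigrams hz).2
    simp only [List.cons_append, List.tail_cons, List.mem_append, List.mem_map,
      List.mem_singleton] at hb
    rcases hb with ⟨c, hc, rfl⟩ | rfl
    · simpa using ⟨ne_of_mem_of_not_mem hc hxu', hu' hc⟩
    · simp
  · rintro ⟨a, b⟩ hz
    have hb := (mem_dropLast_tail_of_mem_bigrams hz).2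
    simp only [List.cons_append, List.tail_cons, List.mem_append, List.mem_map,
      List.mem_singleton] at hb
    rcases hb with ⟨c, hc, rfl⟩ | rfl
    · simpa using Or.inr (hu hc)
    · simp

theorem Phi_eq_of_Phi_append_cons_eq (hxv : x ∉ v) (hxv' : x ∉ v') (hdisj : v.Disjoint v')
    {u u' : List α} (hxu : x ∉ u) (hxu' : x ∉ u')
    (h : Phi (u ++ x :: u') = Phi (v ++ x :: v')) : Phi u = Phi v := by
  classical
  have hu : u ⊆ v := subset_of_Phi_append_cons_eq hxv hdisj hxu h
  have hu' : u'.reverse ⊆ v'.reverse :=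
    subset_of_Phi_append_cons_eq (by simpa) (by simpa using hdisj.symm) (by simpa)
      (Phi_reverse_append_cons_eq h)
  have hu'v : u'.Disjoint v := List.disjoint_of_subset_left (by simpa using hu') hdisj.symm
  rw [Phi_eq_map_filter_Phi_append_cons v hxv hu hxu' hu'v, h,
    ← Phi_eq_map_filter_Phi_append_cons v hxv (List.Subset.refl v) hxv' hdisj.symm]

end Phi

theorem UD_of_split_at_unique_char_general {α : Type*} (x : α) (v v' : List α)
    (hxv : x ∉ v) (hxv' : x ∉ v')
    (hdisj : ∀ c : α, c ∈ v → c ∉ v')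
    (hv : UD v) (hv' : UD v') :
    UD (v ++ x :: v') := by
  classical
  have hvv' : v.Disjoint v' := fun c hc hc' => hdisj c hc hc'
  intro w hw
  have hcount : w.count x = 1 := by
    simp [(perm_of_Phi_eq hw).count_eq, List.count_eq_zero.mpr hxv, List.count_eq_zero.mpr hxv']
  obtain ⟨u, u', rfl, hxu, hxu'⟩ := List.exists_eq_append_cons_of_count_eq_one hcount
  have hu : Phi u = Phi v := Phi_eq_of_Phi_append_cons_eq hxv hxv' hvv' hxu hxu' hw
  have hu' : Phi u' = Phi v' := by
    have := Phi_eq_of_Phi_append_cons_eq (by simpa) (by simpa) (by simpa using hvv'.symm)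
      (by simpa) (by simpa) (Phi_reverse_append_cons_eq hw)
    rwa [Phi_reverse, Phi_reverse, (Multiset.map_injective Prod.swap_injective).eq_iff] at this
  rw [hv u hu, hv' u' hu']

theorem UD_of_split_at_unique_char {α : Type*} [Fintype α] (x : α) (v v' : List α)
    (hxv : x ∉ v) (hxv' : x ∉ v')
    (hdisj : ∀ c : α, c ∈ v → c ∉ v')
    (hv : UD v) (hv' : UD v') :
    UD (v ++ x :: v') :=
  UD_of_split_at_unique_char_general x v v' hxv hxv' hdisj hv hv'
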